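/- Let T ∈ (0,∞), let θ be a partition of [0,T], let (Ω,F,P) be a probability space, and let (E,‖·‖_E) be a real Banach space. Then for all p ∈ [1,∞), β ∈ [0,1], γ ∈ [β,1] and all strongly measurable stochastic processes X, Y : [0,T]×Ω → E it holds that ‖X − [Y]_θ‖_{C^β([0,T];L^p)} ≤ (2·(d_max(θ))^{1−β}/d_min(θ) + 1) · sup_{t∈θ} ‖X_t − Y_t‖_{L^p(P;E)} + (2·(d_max(θ))^{−β} + 2^{−γ}) · (d_max(θ))^γ · |X|_{C^γ([0,T];L^p)} (in [0,∞]), where [Y]_θ denotes the process obtained by piecewise affine linear interpolation of the sample paths of Y at the nodes of θ. -/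

import Mathlib

/-!
Let `W := [X]_θ`. Then `X - [Y]_θ = (X - W) + [X - Y]_θ`, and both terms are estimated separately.
The interpolant `[X - Y]_θ` is bounded by the node error `A`, and on each piece it is Lipschitz
with constant `2A / d_min`; the smaller of the two bounds is at most
`2 A d_max^{1-β} |t-s|^β / d_min`.
For `X - W`, concavity of `x ↦ x ^ γ` bounds the error at `t ∈ [θ_j, θ_{j+1}]` by
`|X|_γ (2 (t - θ_j) (θ_{j+1} - t) / (θ_{j+1} - θ_j)) ^ γ`. This gives the sup bound
`2^{-γ} d_max^γ |X|_γ` and the Hölder bound `2 d_max^{γ-β} |X|_γ`: within one piece directly, and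
across pieces because the error at `t ∈ [θ_j, θ_{j+1}]` is also at most
`d_max^{γ-β} |X|_γ (2 (t - θ_j)) ^ β` (similarly at `s`), and concavity of `x ↦ x ^ β` adds the two.
No probability is used: the estimate holds for paths in any real vector space with an `ℝ≥0∞`-valued
seminorm, and `L^p(P;E)` is the case of `eLpNorm` on `Ω →ₘ[P] E`.
-/

open MeasureTheory ENNReal

/-- Hölder seminorm in time of a stochastic process, measured in `L^p(P;E)`. -/
noncomputable def lpHolderSemi {Ω E : Type} [MeasurableSpace Ω] [NormedAddCommGroup E]
    (P : MeasureTheory.Measure Ω) (T p r : ℝ) (X : ℝ → Ω → E) : ℝ≥0∞ :=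
  ⨆ (s : ℝ) (t : ℝ) (_ : s ∈ Set.Icc (0:ℝ) T) (_ : t ∈ Set.Icc (0:ℝ) T)
    (_ : s ≠ t),
    MeasureTheory.eLpNorm (fun ω => X s ω - X t ω) (ENNReal.ofReal p) P
      / ENNReal.ofReal (|s - t| ^ r)

/-- Supremum in time of the `L^p(P;E)`-norms of a stochastic process. -/
noncomputable def lpSupNorm {Ω E : Type} [MeasurableSpace Ω] [NormedAddCommGroup E]
    (P : MeasureTheory.Measure Ω) (T p : ℝ) (X : ℝ → Ω → E) : ℝ≥0∞ :=
  ⨆ (t : ℝ) (_ : t ∈ Set.Icc (0:ℝ) T),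
    MeasureTheory.eLpNorm (X t) (ENNReal.ofReal p) P

/-- Hölder norm in time of a stochastic process, measured in `L^p(P;E)`. -/
noncomputable def lpHolderNorm {Ω E : Type} [MeasurableSpace Ω] [NormedAddCommGroup E]
    (P : MeasureTheory.Measure Ω) (T p r : ℝ) (X : ℝ → Ω → E) : ℝ≥0∞ :=
  lpSupNorm P T p X + lpHolderSemi P T p r X

/-- Maximal mesh size of the partition with nodes `θ 0 < θ 1 < … < θ K`. -/
noncomputable def dMax (K : ℕ) (θ : ℕ → ℝ) : ℝ := ⨆ j : Fin K, (θ (j + 1) - θ j)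

/-- Minimal mesh size of the partition with nodes `θ 0 < θ 1 < … < θ K`. -/
noncomputable def dMin (K : ℕ) (θ : ℕ → ℝ) : ℝ := ⨅ j : Fin K, (θ (j + 1) - θ j)

section RealInequalities

lemma rpow_le_rpow_mul_rpow_sub {β γ m m' δ : ℝ} (hβ0 : 0 ≤ β) (hβγ : β ≤ γ)
    (hm : 0 ≤ m) (hmm' : m ≤ m') (hmδ : m ≤ δ) : m ^ γ ≤ m' ^ β * δ ^ (γ - β) := by
  rcases (hβ0.trans hβγ).eq_or_lt with hγ | hγ
  · obtain rfl : β = 0 := le_antisymm (hβγ.trans hγ.ge) hβ0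
    simp [← hγ]
  calc m ^ γ = m ^ β * m ^ (γ - β) := by
        rw [← Real.rpow_add' hm (by linarith), add_sub_cancel]
    _ ≤ m' ^ β * δ ^ (γ - β) :=
        mul_le_mul (Real.rpow_le_rpow hm hmm' hβ0) (Real.rpow_le_rpow hm hmδ (by linarith))
          (by positivity) (Real.rpow_nonneg (hm.trans hmm') β)

lemma min_le_rpow_mul_rpow {β r δ : ℝ} (hβ0 : 0 ≤ β) (hβ1 : β ≤ 1) (hr : 0 ≤ r) (hδ : 0 ≤ δ) :
    min r δ ≤ r ^ β * δ ^ (1 - β) := by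
  simpa using rpow_le_rpow_mul_rpow_sub hβ0 hβ1 (le_min hr hδ) (min_le_left r δ)
    (min_le_right r δ)

/-- Concavity of `x ↦ x ^ γ`, tested at the weights of the affine interpolation at
distances `u`, `w` from the two endpoints. -/
lemma div_mul_rpow_add_div_mul_rpow_le {γ u w Δ : ℝ} (hγ0 : 0 ≤ γ) (hγ1 : γ ≤ 1) (hu : 0 ≤ u)
    (hw : 0 ≤ w) (hΔ : u + w = Δ) (huw : 0 < Δ) :
    w / Δ * u ^ γ + u / Δ * w ^ γ ≤ (2 * u * w / Δ) ^ γ := by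
  subst hΔ
  have h := (Real.concaveOn_rpow hγ0 hγ1).2 (Set.mem_Ici.2 hu) (Set.mem_Ici.2 hw)
    (div_nonneg hw huw.le) (div_nonneg hu huw.le) (by field_simp; ring)
  rwa [show 2 * u * w / (u + w) = w / (u + w) * u + u / (u + w) * w by ring]

lemma div_mul_rpow_le_rpow {γ r Δ : ℝ} (hγ1 : γ ≤ 1) (hr : 0 ≤ r) (hrΔ : r ≤ Δ) :
    r / Δ * Δ ^ γ ≤ r ^ γ := by
  rcases hr.eq_or_lt with rfl | hr
  · simp only [zero_div, zero_mul]; positivity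
  have hΔ : 0 < Δ := hr.trans_le hrΔ
  calc r / Δ * Δ ^ γ = r * Δ ^ (γ - 1) := by
        rw [Real.rpow_sub hΔ, Real.rpow_one]; ring
    _ ≤ r * r ^ (γ - 1) :=
        mul_le_mul_of_nonneg_left (Real.rpow_le_rpow_of_nonpos hr hrΔ (by linarith)) hr.le
    _ = r ^ γ := by rw [Real.rpow_sub hr, Real.rpow_one]; field_simp

lemma two_mul_rpow_add_two_mul_rpow_le {β a b : ℝ} (hβ0 : 0 ≤ β) (hβ1 : β ≤ 1) (ha : 0 ≤ a)
    (hb : 0 ≤ b) :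
    (2 * a) ^ β + (2 * b) ^ β ≤ 2 * (a + b) ^ β := by
  have h := (Real.concaveOn_rpow hβ0 hβ1).2 (Set.mem_Ici.2 (by positivity : 0 ≤ 2 * a))
    (Set.mem_Ici.2 (by positivity : 0 ≤ 2 * b)) (by norm_num : (0 : ℝ) ≤ 1 / 2)
    (by norm_num : (0 : ℝ) ≤ 1 / 2) (by norm_num)
  simp only [smul_eq_mul] at h
  rw [show 1 / 2 * (2 * a) + 1 / 2 * (2 * b) = a + b by ring] at h
  linarith

end RealInequalities

structure IsENNSeminorm {F : Type*} [AddCommGroup F] [Module ℝ F] (N : F → ℝ≥0∞) : Prop where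
  add_le : ∀ f g, N (f + g) ≤ N f + N g
  smul : ∀ (c : ℝ) f, N (c • f) = ‖c‖ₑ * N f

noncomputable def supNormOn {F : Type*} (N : F → ℝ≥0∞) (S : Set ℝ) (x : ℝ → F) : ℝ≥0∞ :=
  ⨆ (t : ℝ) (_ : t ∈ S), N (x t)

lemma le_supNormOn {F : Type*} {N : F → ℝ≥0∞} {S : Set ℝ} {x : ℝ → F} {t : ℝ} (ht : t ∈ S) :
    N (x t) ≤ supNormOn N S x :=
  le_iSup₂ (f := fun t (_ : t ∈ S) => N (x t)) t ht

noncomputable def holderSeminormOn {F : Type*} [Sub F] (N : F → ℝ≥0∞) (S : Set ℝ) (r : ℝ)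
    (x : ℝ → F) : ℝ≥0∞ :=
  ⨆ (s : ℝ) (t : ℝ) (_ : s ∈ S) (_ : t ∈ S) (_ : s ≠ t),
    N (x s - x t) / ENNReal.ofReal (|s - t| ^ r)

namespace IsENNSeminorm

variable {F : Type*} [AddCommGroup F] [Module ℝ F] {N : F → ℝ≥0∞}

lemma map_zero (hN : IsENNSeminorm N) : N 0 = 0 := by
  simpa using hN.smul 0 0

lemma map_neg (hN : IsENNSeminorm N) (f : F) : N (-f) = N f := by
  simpa using hN.smul (-1) f

lemma map_sub_comm (hN : IsENNSeminorm N) (f g : F) : N (f - g) = N (g - f) := by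
  rw [← neg_sub, hN.map_neg]

lemma sub_le (hN : IsENNSeminorm N) (f g : F) : N (f - g) ≤ N f + N g := by
  simpa [sub_eq_add_neg, hN.map_neg] using hN.add_le f (-g)

lemma smul_of_nonneg (hN : IsENNSeminorm N) {c : ℝ} (hc : 0 ≤ c) (f : F) :
    N (c • f) = ENNReal.ofReal c * N f := by
  rw [hN.smul, Real.enorm_eq_ofReal hc]

lemma smul_add_smul_le (hN : IsENNSeminorm N) {a b : ℝ} (ha : 0 ≤ a) (hb : 0 ≤ b) (f g : F) :
    N (a • f + b • g) ≤ ENNReal.ofReal a * N f + ENNReal.ofReal b * N g := by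
  simpa only [hN.smul_of_nonneg ha, hN.smul_of_nonneg hb] using hN.add_le (a • f) (b • g)

variable {S : Set ℝ} {r : ℝ} {x y : ℝ → F}

lemma le_holderSeminormOn (hN : IsENNSeminorm N) {s t : ℝ} (hs : s ∈ S) (ht : t ∈ S)
    (hst : s ≤ t) : N (x t - x s) ≤ holderSeminormOn N S r x * ENNReal.ofReal ((t - s) ^ r) := by
  rcases hst.eq_or_lt with rfl | hst
  · simp [hN.map_zero]
  have hpos : 0 < (t - s) ^ r := Real.rpow_pos_of_pos (sub_pos.2 hst) r
  rw [← ENNReal.div_le_iff (by simpa using hpos) ENNReal.ofReal_ne_top]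
  refine le_iSup_of_le t <| le_iSup_of_le s <| le_iSup_of_le ht <| le_iSup_of_le hs <|
    le_iSup_of_le hst.ne' ?_
  rw [abs_of_pos (sub_pos.2 hst)]

lemma holderSeminormOn_le (hN : IsENNSeminorm N) {C : ℝ≥0∞}
    (h : ∀ s ∈ S, ∀ t ∈ S, s < t → N (x t - x s) ≤ C * ENNReal.ofReal ((t - s) ^ r)) :
    holderSeminormOn N S r x ≤ C := by
  refine iSup_le fun s => iSup_le fun t => iSup_le fun hs => iSup_le fun ht => iSup_le fun hst => ?_
  rcases hst.lt_or_gt with hst | hst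
  · rw [hN.map_sub_comm, abs_sub_comm, abs_of_pos (sub_pos.2 hst)]
    exact ENNReal.div_le_of_le_mul (h s hs t ht hst)
  · rw [abs_of_pos (sub_pos.2 hst)]
    exact ENNReal.div_le_of_le_mul (h t ht s hs hst)

lemma supNormOn_add_le (hN : IsENNSeminorm N) :
    supNormOn N S (x + y) ≤ supNormOn N S x + supNormOn N S y :=
  iSup₂_le fun t ht => (hN.add_le (x t) (y t)).trans <|
    add_le_add (le_supNormOn ht) (le_supNormOn ht)

lemma holderSeminormOn_add_le (hN : IsENNSeminorm N) :
    holderSeminormOn N S r (x + y) ≤ holderSeminormOn N S r x + holderSeminormOn N S r y := by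
  refine hN.holderSeminormOn_le fun s hs t ht hst => ?_
  calc N ((x + y) t - (x + y) s) ≤ N (x t - x s) + N (y t - y s) := by
        rw [Pi.add_apply, Pi.add_apply, add_sub_add_comm]; exact hN.add_le _ _
    _ ≤ _ := by
        rw [add_mul]
        exact add_le_add (hN.le_holderSeminormOn hs ht hst.le) (hN.le_holderSeminormOn hs ht hst.le)

end IsENNSeminorm

section Partition

variable {K : ℕ} {θ : ℕ → ℝ}

lemma exists_mem_Icc_succ_of_mem_Icc (hK : 1 ≤ K) {t : ℝ} (ht : t ∈ Set.Icc (θ 0) (θ K)) :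
    ∃ j < K, t ∈ Set.Icc (θ j) (θ (j + 1)) := by
  induction K, hK using Nat.le_induction with
  | base => exact ⟨0, one_pos, ht⟩
  | succ K _ ih =>
    by_cases htK : t ≤ θ K
    · obtain ⟨j, hj, hjt⟩ := ih ⟨ht.1, htK⟩
      exact ⟨j, by omega, hjt⟩
    · exact ⟨K, K.lt_succ_self, (not_le.1 htK).le, ht.2⟩

lemma node_mem_Icc (hθ : ∀ j < K, θ j < θ (j + 1)) {j : ℕ} (hj : j ≤ K) :
    θ j ∈ Set.Icc (θ 0) (θ K) :=
  have hmono := (strictMonoOn_Iic_of_lt_succ hθ).monotoneOn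
  ⟨hmono (Set.mem_Iic.2 (Nat.zero_le K)) (Set.mem_Iic.2 hj) (Nat.zero_le j),
    hmono (Set.mem_Iic.2 hj) (Set.mem_Iic.2 le_rfl) hj⟩

lemma Icc_succ_subset_Icc (hθ : ∀ j < K, θ j < θ (j + 1)) {j : ℕ} (hj : j < K) :
    Set.Icc (θ j) (θ (j + 1)) ⊆ Set.Icc (θ 0) (θ K) :=
  Set.Icc_subset_Icc (node_mem_Icc hθ hj.le).1 (node_mem_Icc hθ hj).2

lemma sub_le_dMax {j : ℕ} (hj : j < K) : θ (j + 1) - θ j ≤ dMax K θ :=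
  le_ciSup (f := fun i : Fin K => θ (i + 1) - θ i) (Set.finite_range _).bddAbove ⟨j, hj⟩

lemma dMin_le_sub {j : ℕ} (hj : j < K) : dMin K θ ≤ θ (j + 1) - θ j :=
  ciInf_le (f := fun i : Fin K => θ (i + 1) - θ i) (Set.finite_range _).bddBelow ⟨j, hj⟩

lemma dMin_pos (hθ : ∀ j < K, θ j < θ (j + 1)) (hK : 1 ≤ K) : 0 < dMin K θ := by
  have : Nonempty (Fin K) := ⟨⟨0, hK⟩⟩
  obtain ⟨j, hj⟩ := exists_eq_ciInf_of_finite (f := fun i : Fin K => θ (i + 1) - θ i)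
  rw [dMin, ← hj]
  exact sub_pos.2 (hθ j j.2)

lemma dMin_le_dMax (hK : 1 ≤ K) : dMin K θ ≤ dMax K θ :=
  (dMin_le_sub hK).trans (sub_le_dMax hK)

end Partition

section Interpolation

variable {F : Type*} [AddCommGroup F] [Module ℝ F] {K : ℕ} {θ : ℕ → ℝ}

noncomputable def secant (θ : ℕ → ℝ) (y : ℝ → F) (j : ℕ) (t : ℝ) : F :=
  ((θ (j + 1) - t) / (θ (j + 1) - θ j)) • y (θ j) + ((t - θ j) / (θ (j + 1) - θ j)) • y (θ (j + 1))

/-- `z` is the piecewise affine interpolation `[y]_θ` of `y` on `[θ 0, θ K]`. -/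
def IsPiecewiseAffineInterp (K : ℕ) (θ : ℕ → ℝ) (z y : ℝ → F) : Prop :=
  ∀ j < K, ∀ t ∈ Set.Icc (θ j) (θ (j + 1)), z t = secant θ y j t

lemma secant_left {y : ℝ → F} {j : ℕ} (hj : θ j < θ (j + 1)) : secant θ y j (θ j) = y (θ j) := by
  simp [secant, (sub_pos.2 hj).ne']

lemma secant_right {y : ℝ → F} {j : ℕ} (hj : θ j < θ (j + 1)) :
    secant θ y j (θ (j + 1)) = y (θ (j + 1)) := by
  simp [secant, (sub_pos.2 hj).ne']

lemma secant_sub_secant (y : ℝ → F) (j : ℕ) (s t : ℝ) :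
    secant θ y j t - secant θ y j s
      = ((t - s) / (θ (j + 1) - θ j)) • (y (θ (j + 1)) - y (θ j)) := by
  simp only [secant, smul_sub]
  match_scalars <;> ring

lemma sub_secant (x : ℝ → F) {j : ℕ} (hj : θ j < θ (j + 1)) (t : ℝ) :
    x t - secant θ x j t = ((θ (j + 1) - t) / (θ (j + 1) - θ j)) • (x t - x (θ j))
      + ((t - θ j) / (θ (j + 1) - θ j)) • (x t - x (θ (j + 1))) := by
  have := (sub_pos.2 hj).ne'
  simp only [secant, smul_sub]
  match_scalars
  · field_simp
    ring
  all_goals ring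

lemma secant_eq_secant (hθ : ∀ j < K, θ j < θ (j + 1)) (y : ℝ → F) {i j : ℕ} (hi : i < K)
    (hj : j < K) {t : ℝ} (hti : t ∈ Set.Icc (θ i) (θ (i + 1)))
    (htj : t ∈ Set.Icc (θ j) (θ (j + 1))) : secant θ y i t = secant θ y j t := by
  wlog hij : i ≤ j generalizing i j
  · exact (this hj hi htj hti (le_of_not_ge hij)).symm
  rcases hij.eq_or_lt with rfl | hij
  · rfl
  have hmono := strictMonoOn_Iic_of_lt_succ hθ
  have hij' : θ (i + 1) ≤ θ j := hmono.monotoneOn (Set.mem_Iic.2 hi) (Set.mem_Iic.2 hj.le) hij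
  have hti' : t = θ (i + 1) := le_antisymm hti.2 (hij'.trans htj.1)
  have hj' : i + 1 = j := hmono.injOn (Set.mem_Iic.2 hi) (Set.mem_Iic.2 hj.le)
    (le_antisymm hij' (hti' ▸ htj.1))
  subst hj'
  rw [hti', secant_right (hθ i hi), secant_left (hθ _ hj)]

lemma exists_isPiecewiseAffineInterp (hθ : ∀ j < K, θ j < θ (j + 1)) (y : ℝ → F) :
    ∃ z, IsPiecewiseAffineInterp K θ z y := by
  classical
  refine ⟨fun t => if h : ∃ j < K, t ∈ Set.Icc (θ j) (θ (j + 1)) then secant θ y h.choose t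
    else 0, fun j hj t ht => ?_⟩
  have h : ∃ j < K, t ∈ Set.Icc (θ j) (θ (j + 1)) := ⟨j, hj, ht⟩
  simp only [dif_pos h]
  exact secant_eq_secant hθ y h.choose_spec.1 hj h.choose_spec.2 ht

lemma IsPiecewiseAffineInterp.sub {z y z' y' : ℝ → F} (h : IsPiecewiseAffineInterp K θ z y)
    (h' : IsPiecewiseAffineInterp K θ z' y') : IsPiecewiseAffineInterp K θ (z - z') (y - y') := by
  intro j hj t ht
  simp only [Pi.sub_apply, h j hj t ht, h' j hj t ht, secant, smul_sub]
  abel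

end Interpolation

namespace IsENNSeminorm

variable {F : Type*} [AddCommGroup F] [Module ℝ F] {N : F → ℝ≥0∞} {K : ℕ} {θ : ℕ → ℝ}

lemma secant_le (hN : IsENNSeminorm N) {y : ℝ → F} {j : ℕ} (hj : θ j < θ (j + 1)) {A : ℝ≥0∞}
    (hA₀ : N (y (θ j)) ≤ A) (hA₁ : N (y (θ (j + 1))) ≤ A) {t : ℝ}
    (ht : t ∈ Set.Icc (θ j) (θ (j + 1))) : N (secant θ y j t) ≤ A := by
  have hΔ := sub_pos.2 hj
  have ha : 0 ≤ (θ (j + 1) - t) / (θ (j + 1) - θ j) := div_nonneg (by linarith [ht.2]) hΔ.le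
  have hb : 0 ≤ (t - θ j) / (θ (j + 1) - θ j) := div_nonneg (by linarith [ht.1]) hΔ.le
  calc N (secant θ y j t)
      ≤ ENNReal.ofReal ((θ (j + 1) - t) / (θ (j + 1) - θ j)) * A
        + ENNReal.ofReal ((t - θ j) / (θ (j + 1) - θ j)) * A :=
        (hN.smul_add_smul_le ha hb _ _).trans (by gcongr)
    _ = A := by
        rw [← add_mul, ← ENNReal.ofReal_add ha hb, ← add_div, sub_add_sub_cancel,
          div_self hΔ.ne', ENNReal.ofReal_one, one_mul]

lemma secant_sub_secant_le (hN : IsENNSeminorm N) (hθ : ∀ j < K, θ j < θ (j + 1)) {y : ℝ → F}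
    {j : ℕ} (hj : j < K) {A : ℝ≥0∞} (hA₀ : N (y (θ j)) ≤ A) (hA₁ : N (y (θ (j + 1))) ≤ A)
    {s t : ℝ} (hst : s ≤ t) :
    N (secant θ y j t - secant θ y j s)
      ≤ ENNReal.ofReal (t - s) * (ENNReal.ofReal (2 / dMin K θ) * A) := by
  have hΔ := sub_pos.2 (hθ j hj)
  have hδ' := dMin_pos hθ (by omega)
  rw [secant_sub_secant, hN.smul_of_nonneg (div_nonneg (sub_nonneg.2 hst) hΔ.le)]
  calc ENNReal.ofReal ((t - s) / (θ (j + 1) - θ j)) * N (y (θ (j + 1)) - y (θ j))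
      ≤ ENNReal.ofReal ((t - s) / (θ (j + 1) - θ j)) * (ENNReal.ofReal 2 * A) := by
        rw [ENNReal.ofReal_ofNat, two_mul]
        gcongr
        exact (hN.sub_le _ _).trans (add_le_add hA₁ hA₀)
    _ ≤ ENNReal.ofReal (t - s) * (ENNReal.ofReal (2 / dMin K θ) * A) := by
        rw [← mul_assoc, ← mul_assoc, ← ENNReal.ofReal_mul (by positivity),
          ← ENNReal.ofReal_mul (sub_nonneg.2 hst)]
        refine mul_le_mul_of_nonneg_right (ENNReal.ofReal_le_ofReal ?_) zero_le
        rw [div_mul_eq_mul_div, mul_div_assoc]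
        exact mul_le_mul_of_nonneg_left
          (div_le_div_of_nonneg_left zero_le_two hδ' (dMin_le_sub hj)) (sub_nonneg.2 hst)

lemma map_sub_le_of_pieces (hN : IsENNSeminorm N) {f : ℝ → F} {L : ℝ≥0∞}
    (h : ∀ j < K, ∀ s ∈ Set.Icc (θ j) (θ (j + 1)), ∀ t ∈ Set.Icc (θ j) (θ (j + 1)), s ≤ t →
      N (f t - f s) ≤ ENNReal.ofReal (t - s) * L)
    {s t : ℝ} (hs : θ 0 ≤ s) (hst : s ≤ t) (ht : t ≤ θ K) :
    N (f t - f s) ≤ ENNReal.ofReal (t - s) * L := by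
  suffices ∀ n ≤ K, ∀ t, s ≤ t → t ≤ θ n → N (f t - f s) ≤ ENNReal.ofReal (t - s) * L from
    this K le_rfl t hst ht
  intro n
  induction n with
  | zero =>
    intro _ t hst ht
    obtain rfl : s = t := le_antisymm hst (ht.trans hs)
    simp [hN.map_zero]
  | succ n ih =>
    intro hn t hst ht
    by_cases htn : t ≤ θ n
    · exact ih (by omega) t hst htn
    by_cases hsn : θ n ≤ s
    · exact h n (by omega) s ⟨hsn, hst.trans ht⟩ t ⟨hsn.trans hst, ht⟩ hst
    rw [not_le] at htn hsn
    calc N (f t - f s) ≤ N (f t - f (θ n)) + N (f (θ n) - f s) := by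
          simpa using hN.add_le (f t - f (θ n)) (f (θ n) - f s)
      _ ≤ ENNReal.ofReal (t - θ n) * L + ENNReal.ofReal (θ n - s) * L :=
          add_le_add (h n (by omega) _ ⟨le_rfl, htn.le.trans ht⟩ t ⟨htn.le, ht⟩ htn.le)
            (ih (by omega) _ hsn.le le_rfl)
      _ = ENNReal.ofReal (t - s) * L := by
          rw [← add_mul, ← ENNReal.ofReal_add (by linarith) (by linarith), sub_add_sub_cancel]

end IsENNSeminorm

namespace IsPiecewiseAffineInterp

variable {F : Type*} [AddCommGroup F] [Module ℝ F] {N : F → ℝ≥0∞} {K : ℕ} {θ : ℕ → ℝ}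
  {v d : ℝ → F} {A : ℝ≥0∞}

lemma supNormOn_le (hv : IsPiecewiseAffineInterp K θ v d) (hN : IsENNSeminorm N)
    (hθ : ∀ j < K, θ j < θ (j + 1)) (hK : 1 ≤ K) (hA : ∀ j ≤ K, N (d (θ j)) ≤ A) :
    supNormOn N (Set.Icc (θ 0) (θ K)) v ≤ A :=
  iSup₂_le fun t ht => by
    obtain ⟨j, hj, htj⟩ := exists_mem_Icc_succ_of_mem_Icc hK ht
    rw [hv j hj t htj]
    exact hN.secant_le (hθ j hj) (hA j hj.le) (hA (j + 1) hj) htj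

lemma map_sub_le (hv : IsPiecewiseAffineInterp K θ v d) (hN : IsENNSeminorm N)
    (hθ : ∀ j < K, θ j < θ (j + 1)) (hK : 1 ≤ K) (hA : ∀ j ≤ K, N (d (θ j)) ≤ A) {s t : ℝ}
    (hs : s ∈ Set.Icc (θ 0) (θ K)) (ht : t ∈ Set.Icc (θ 0) (θ K)) (hst : s ≤ t) :
    N (v t - v s) ≤ ENNReal.ofReal (2 * min (t - s) (dMax K θ) / dMin K θ) * A := by
  rcases le_total (t - s) (dMax K θ) with h | h
  · have hlip := hN.map_sub_le_of_pieces (f := v) (fun j hj s hs t ht hst => by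
      rw [hv j hj s hs, hv j hj t ht]
      exact hN.secant_sub_secant_le hθ hj (hA j hj.le) (hA (j + 1) hj) hst) hs.1 hst ht.2
    rwa [← mul_assoc, ← ENNReal.ofReal_mul (by linarith), mul_div_assoc', mul_comm (t - s),
      ← min_eq_left h] at hlip
  · have hsup := hv.supNormOn_le hN hθ hK hA
    calc N (v t - v s) ≤ A + A :=
          (hN.sub_le _ _).trans (add_le_add ((le_supNormOn ht).trans hsup)
            ((le_supNormOn hs).trans hsup))
      _ ≤ ENNReal.ofReal (2 * min (t - s) (dMax K θ) / dMin K θ) * A := by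
          rw [← two_mul, min_eq_right h, ← ENNReal.ofReal_ofNat]
          gcongr
          rw [mul_div_assoc, le_mul_iff_one_le_right two_pos, one_le_div (dMin_pos hθ hK)]
          exact dMin_le_dMax hK

lemma holderSeminormOn_le (hv : IsPiecewiseAffineInterp K θ v d) (hN : IsENNSeminorm N)
    (hθ : ∀ j < K, θ j < θ (j + 1)) (hK : 1 ≤ K) {β : ℝ} (hβ0 : 0 ≤ β) (hβ1 : β ≤ 1)
    (hA : ∀ j ≤ K, N (d (θ j)) ≤ A) :
    holderSeminormOn N (Set.Icc (θ 0) (θ K)) β v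
      ≤ ENNReal.ofReal (2 * dMax K θ ^ (1 - β) / dMin K θ) * A := by
  have hδ' := dMin_pos hθ hK
  have hδ := hδ'.trans_le (dMin_le_dMax hK)
  refine hN.holderSeminormOn_le fun s hs t ht hst => ?_
  refine (hv.map_sub_le hN hθ hK hA hs ht hst.le).trans ?_
  rw [mul_right_comm, ← ENNReal.ofReal_mul (by positivity)]
  gcongr
  calc 2 * min (t - s) (dMax K θ) / dMin K θ
      ≤ 2 * ((t - s) ^ β * dMax K θ ^ (1 - β)) / dMin K θ := by
        gcongr
        exact min_le_rpow_mul_rpow hβ0 hβ1 (by linarith) hδ.le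
    _ = 2 * dMax K θ ^ (1 - β) / dMin K θ * (t - s) ^ β := by ring

end IsPiecewiseAffineInterp

namespace IsENNSeminorm

variable {F : Type*} [AddCommGroup F] [Module ℝ F] {N : F → ℝ≥0∞} {θ : ℕ → ℝ} {x : ℝ → F}
  {S : Set ℝ} {j : ℕ} {γ : ℝ}

lemma sub_secant_le (hN : IsENNSeminorm N) (hj : θ j < θ (j + 1))
    (hjS : Set.Icc (θ j) (θ (j + 1)) ⊆ S) (hγ0 : 0 ≤ γ) (hγ1 : γ ≤ 1) {t : ℝ}
    (ht : t ∈ Set.Icc (θ j) (θ (j + 1))) :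
    N (x t - secant θ x j t)
      ≤ ENNReal.ofReal ((2 * (t - θ j) * (θ (j + 1) - t) / (θ (j + 1) - θ j)) ^ γ)
        * holderSeminormOn N S γ x := by
  set H := holderSeminormOn N S γ x
  have hΔ := sub_pos.2 hj
  have hu : 0 ≤ t - θ j := sub_nonneg.2 ht.1
  have hw : 0 ≤ θ (j + 1) - t := sub_nonneg.2 ht.2
  have ha : 0 ≤ (θ (j + 1) - t) / (θ (j + 1) - θ j) := div_nonneg hw hΔ.le
  have hb : 0 ≤ (t - θ j) / (θ (j + 1) - θ j) := div_nonneg hu hΔ.le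
  rw [sub_secant x hj]
  calc _ ≤ ENNReal.ofReal ((θ (j + 1) - t) / (θ (j + 1) - θ j)) * N (x t - x (θ j))
        + ENNReal.ofReal ((t - θ j) / (θ (j + 1) - θ j)) * N (x t - x (θ (j + 1))) :=
        hN.smul_add_smul_le ha hb _ _
    _ ≤ ENNReal.ofReal ((θ (j + 1) - t) / (θ (j + 1) - θ j))
          * (H * ENNReal.ofReal ((t - θ j) ^ γ))
        + ENNReal.ofReal ((t - θ j) / (θ (j + 1) - θ j))
          * (H * ENNReal.ofReal ((θ (j + 1) - t) ^ γ)) := by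
        gcongr
        · exact hN.le_holderSeminormOn (hjS ⟨le_rfl, hj.le⟩) (hjS ht) ht.1
        · rw [hN.map_sub_comm]
          exact hN.le_holderSeminormOn (hjS ht) (hjS ⟨hj.le, le_rfl⟩) ht.2
    _ = ENNReal.ofReal ((θ (j + 1) - t) / (θ (j + 1) - θ j) * (t - θ j) ^ γ
          + (t - θ j) / (θ (j + 1) - θ j) * (θ (j + 1) - t) ^ γ) * H := by
        rw [ENNReal.ofReal_add (by positivity) (by positivity), ENNReal.ofReal_mul ha,
          ENNReal.ofReal_mul hb]
        ring
    _ ≤ _ := by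
        gcongr
        exact div_mul_rpow_add_div_mul_rpow_le hγ0 hγ1 hu hw (by ring) hΔ

lemma sub_secant_le_mul_min_rpow (hN : IsENNSeminorm N) (hj : θ j < θ (j + 1))
    (hjS : Set.Icc (θ j) (θ (j + 1)) ⊆ S) {β : ℝ} (hβ0 : 0 ≤ β) (hβγ : β ≤ γ) (hγ1 : γ ≤ 1)
    {δ : ℝ} (hjδ : θ (j + 1) - θ j ≤ δ) {t : ℝ} (ht : t ∈ Set.Icc (θ j) (θ (j + 1))) :
    N (x t - secant θ x j t)
      ≤ ENNReal.ofReal (δ ^ (γ - β) * (2 * min (t - θ j) (θ (j + 1) - t)) ^ β)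
        * holderSeminormOn N S γ x := by
  refine (hN.sub_secant_le hj hjS (hβ0.trans hβγ) hγ1 ht).trans ?_
  have hΔ := sub_pos.2 hj
  have hu : 0 ≤ t - θ j := sub_nonneg.2 ht.1
  have hw : 0 ≤ θ (j + 1) - t := sub_nonneg.2 ht.2
  have hmin : 2 * (t - θ j) * (θ (j + 1) - t) / (θ (j + 1) - θ j)
      ≤ 2 * min (t - θ j) (θ (j + 1) - t) := by
    rw [div_le_iff₀ hΔ]
    rcases min_cases (t - θ j) (θ (j + 1) - t) with ⟨h, -⟩ | ⟨h, -⟩ <;> rw [h] <;> nlinarith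
  have hδ : 2 * min (t - θ j) (θ (j + 1) - t) ≤ δ := by
    linarith [min_le_left (t - θ j) (θ (j + 1) - t), min_le_right (t - θ j) (θ (j + 1) - t)]
  gcongr
  exact (rpow_le_rpow_mul_rpow_sub hβ0 hβγ (by positivity) hmin (hmin.trans hδ)).trans_eq
    (mul_comm _ _)

lemma sub_secant_sub_le (hN : IsENNSeminorm N) (hj : θ j < θ (j + 1))
    (hjS : Set.Icc (θ j) (θ (j + 1)) ⊆ S) (hγ1 : γ ≤ 1) {s t : ℝ}
    (hs : s ∈ Set.Icc (θ j) (θ (j + 1))) (ht : t ∈ Set.Icc (θ j) (θ (j + 1))) (hst : s ≤ t) :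
    N ((x t - secant θ x j t) - (x s - secant θ x j s))
      ≤ ENNReal.ofReal (2 * (t - s) ^ γ) * holderSeminormOn N S γ x := by
  set H := holderSeminormOn N S γ x
  have hΔ := sub_pos.2 hj
  have hρ : 0 ≤ (t - s) / (θ (j + 1) - θ j) := div_nonneg (sub_nonneg.2 hst) hΔ.le
  rw [sub_sub_sub_comm, secant_sub_secant]
  calc _ ≤ N (x t - x s) + N (((t - s) / (θ (j + 1) - θ j)) • (x (θ (j + 1)) - x (θ j))) :=
        hN.sub_le _ _
    _ ≤ H * ENNReal.ofReal ((t - s) ^ γ)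
        + ENNReal.ofReal ((t - s) / (θ (j + 1) - θ j))
          * (H * ENNReal.ofReal ((θ (j + 1) - θ j) ^ γ)) := by
        rw [hN.smul_of_nonneg hρ]
        gcongr
        · exact hN.le_holderSeminormOn (hjS hs) (hjS ht) hst
        · exact hN.le_holderSeminormOn (hjS ⟨le_rfl, hj.le⟩) (hjS ⟨hj.le, le_rfl⟩) hj.le
    _ = ENNReal.ofReal ((t - s) ^ γ + (t - s) / (θ (j + 1) - θ j) * (θ (j + 1) - θ j) ^ γ) * H := by
        rw [ENNReal.ofReal_add (by positivity) (by positivity), ENNReal.ofReal_mul hρ]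
        ring
    _ ≤ _ := by
        gcongr
        linarith [div_mul_rpow_le_rpow hγ1 (sub_nonneg.2 hst) (by linarith [hs.1, ht.2] :
          t - s ≤ θ (j + 1) - θ j)]

lemma sub_secant_sub_sub_secant_le (hN : IsENNSeminorm N) {i : ℕ} (hi : θ i < θ (i + 1))
    (hj : θ j < θ (j + 1)) (hiS : Set.Icc (θ i) (θ (i + 1)) ⊆ S)
    (hjS : Set.Icc (θ j) (θ (j + 1)) ⊆ S) {β : ℝ} (hβ0 : 0 ≤ β) (hβ1 : β ≤ 1) (hβγ : β ≤ γ)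
    (hγ1 : γ ≤ 1) {δ : ℝ} (hδ : 0 ≤ δ) (hiδ : θ (i + 1) - θ i ≤ δ) (hjδ : θ (j + 1) - θ j ≤ δ)
    (hij : θ (i + 1) ≤ θ j) {s t : ℝ} (hs : s ∈ Set.Icc (θ i) (θ (i + 1)))
    (ht : t ∈ Set.Icc (θ j) (θ (j + 1))) :
    N ((x t - secant θ x j t) - (x s - secant θ x i s))
      ≤ ENNReal.ofReal (2 * δ ^ (γ - β) * (t - s) ^ β) * holderSeminormOn N S γ x := by
  have hu := sub_nonneg.2 ht.1
  have hw := sub_nonneg.2 hs.2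
  have hmin_t : 0 ≤ min (t - θ j) (θ (j + 1) - t) := le_min hu (sub_nonneg.2 ht.2)
  have hmin_s : 0 ≤ min (s - θ i) (θ (i + 1) - s) := le_min (sub_nonneg.2 hs.1) hw
  calc _ ≤ N (x t - secant θ x j t) + N (x s - secant θ x i s) := hN.sub_le _ _
    _ ≤ ENNReal.ofReal (δ ^ (γ - β) * (2 * min (t - θ j) (θ (j + 1) - t)) ^ β)
          * holderSeminormOn N S γ x
        + ENNReal.ofReal (δ ^ (γ - β) * (2 * min (s - θ i) (θ (i + 1) - s)) ^ β)
          * holderSeminormOn N S γ x :=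
        add_le_add (hN.sub_secant_le_mul_min_rpow hj hjS hβ0 hβγ hγ1 hjδ ht)
          (hN.sub_secant_le_mul_min_rpow hi hiS hβ0 hβγ hγ1 hiδ hs)
    _ ≤ _ := by
        rw [← add_mul, ← ENNReal.ofReal_add (by positivity) (by positivity), ← mul_add]
        gcongr ENNReal.ofReal ?_ * _
        calc _ ≤ δ ^ (γ - β) * ((2 * (t - θ j)) ^ β + (2 * (θ (i + 1) - s)) ^ β) := by
              gcongr
              · exact min_le_left _ _
              · exact min_le_right _ _
          _ ≤ δ ^ (γ - β) * (2 * ((t - θ j) + (θ (i + 1) - s)) ^ β) := by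
              gcongr
              exact two_mul_rpow_add_two_mul_rpow_le hβ0 hβ1 hu hw
          _ ≤ δ ^ (γ - β) * (2 * (t - s) ^ β) := by
              gcongr
              linarith
          _ = _ := by ring

end IsENNSeminorm

namespace IsPiecewiseAffineInterp

variable {F : Type*} [AddCommGroup F] [Module ℝ F] {N : F → ℝ≥0∞} {K : ℕ} {θ : ℕ → ℝ}
  {w x : ℝ → F} {γ : ℝ}

lemma supNormOn_sub_le (hw : IsPiecewiseAffineInterp K θ w x) (hN : IsENNSeminorm N)
    (hθ : ∀ j < K, θ j < θ (j + 1)) (hK : 1 ≤ K) (hγ0 : 0 ≤ γ) (hγ1 : γ ≤ 1) :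
    supNormOn N (Set.Icc (θ 0) (θ K)) (x - w)
      ≤ ENNReal.ofReal (2 ^ (-γ) * dMax K θ ^ γ) * holderSeminormOn N (Set.Icc (θ 0) (θ K)) γ x :=
  iSup₂_le fun t ht => by
    obtain ⟨j, hj, htj⟩ := exists_mem_Icc_succ_of_mem_Icc hK ht
    have hΔ := sub_pos.2 (hθ j hj)
    rw [Pi.sub_apply, hw j hj t htj]
    refine (hN.sub_secant_le (hθ j hj) (Icc_succ_subset_Icc hθ hj) hγ0 hγ1 htj).trans ?_
    have hm : 2 * (t - θ j) * (θ (j + 1) - t) / (θ (j + 1) - θ j) ≤ dMax K θ / 2 := by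
      rw [div_le_iff₀ hΔ]
      nlinarith [sq_nonneg (t - θ j - (θ (j + 1) - t)), sub_le_dMax (θ := θ) hj]
    gcongr
    have htl := sub_nonneg.2 htj.1
    have htr := sub_nonneg.2 htj.2
    calc _ ≤ (dMax K θ / 2) ^ γ := Real.rpow_le_rpow (by positivity) hm hγ0
      _ = 2 ^ (-γ) * dMax K θ ^ γ := by
          rw [Real.div_rpow (by linarith [sub_le_dMax (θ := θ) hj]) zero_le_two,
            Real.rpow_neg zero_le_two, div_eq_inv_mul]

lemma holderSeminormOn_sub_le (hw : IsPiecewiseAffineInterp K θ w x) (hN : IsENNSeminorm N)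
    (hθ : ∀ j < K, θ j < θ (j + 1)) (hK : 1 ≤ K) {β : ℝ} (hβ0 : 0 ≤ β) (hβ1 : β ≤ 1)
    (hβγ : β ≤ γ) (hγ1 : γ ≤ 1) :
    holderSeminormOn N (Set.Icc (θ 0) (θ K)) β (x - w)
      ≤ ENNReal.ofReal (2 * dMax K θ ^ (γ - β)) * holderSeminormOn N (Set.Icc (θ 0) (θ K)) γ x := by
  have hδ : 0 < dMax K θ := (dMin_pos hθ hK).trans_le (dMin_le_dMax hK)
  have hmono := (strictMonoOn_Iic_of_lt_succ hθ).monotoneOn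
  refine hN.holderSeminormOn_le fun s hs t ht hst => ?_
  obtain ⟨i, hi, hsi⟩ := exists_mem_Icc_succ_of_mem_Icc hK hs
  obtain ⟨j, hj, htj⟩ := exists_mem_Icc_succ_of_mem_Icc hK ht
  rw [mul_right_comm, ← ENNReal.ofReal_mul (by positivity), Pi.sub_apply, Pi.sub_apply,
    hw i hi s hsi]
  by_cases hti : t ≤ θ (i + 1)
  · have hti' : t ∈ Set.Icc (θ i) (θ (i + 1)) := ⟨hsi.1.trans hst.le, hti⟩
    rw [hw i hi t hti']
    refine (hN.sub_secant_sub_le (hθ i hi) (Icc_succ_subset_Icc hθ hi) hγ1 hsi hti'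
      hst.le).trans ?_
    gcongr ENNReal.ofReal ?_ * _
    rw [mul_assoc]
    gcongr
    exact (rpow_le_rpow_mul_rpow_sub hβ0 hβγ (by linarith) le_rfl
      (by linarith [hsi.1, sub_le_dMax (θ := θ) hi])).trans_eq (mul_comm _ _)
  · rw [not_le] at hti
    have hij : i + 1 ≤ j := by
      by_contra! h
      linarith [htj.2, hmono (Set.mem_Iic.2 hj) (Set.mem_Iic.2 hi) (by omega : j + 1 ≤ i + 1)]
    rw [hw j hj t htj]
    exact hN.sub_secant_sub_sub_secant_le (hθ i hi) (hθ j hj) (Icc_succ_subset_Icc hθ hi)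
      (Icc_succ_subset_Icc hθ hj) hβ0 hβ1 hβγ hγ1 hδ.le (sub_le_dMax hi) (sub_le_dMax hj)
      (hmono (Set.mem_Iic.2 hi) (Set.mem_Iic.2 hj.le) hij) hsi htj

end IsPiecewiseAffineInterp

theorem IsENNSeminorm.supNormOn_add_holderSeminormOn_sub_le {F : Type*} [AddCommGroup F]
    [Module ℝ F] {N : F → ℝ≥0∞} (hN : IsENNSeminorm N) {K : ℕ} {θ : ℕ → ℝ}
    (hθ : ∀ j < K, θ j < θ (j + 1)) (hK : 1 ≤ K) {β γ : ℝ} (hβ0 : 0 ≤ β) (hβ1 : β ≤ 1)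
    (hβγ : β ≤ γ) (hγ1 : γ ≤ 1) {x y z : ℝ → F} (hz : IsPiecewiseAffineInterp K θ z y) :
    supNormOn N (Set.Icc (θ 0) (θ K)) (x - z) + holderSeminormOn N (Set.Icc (θ 0) (θ K)) β (x - z)
      ≤ ENNReal.ofReal (2 * dMax K θ ^ (1 - β) / dMin K θ + 1)
          * (⨆ j : Fin (K + 1), N (x (θ j) - y (θ j)))
        + ENNReal.ofReal ((2 * dMax K θ ^ (-β) + 2 ^ (-γ)) * dMax K θ ^ γ)
          * holderSeminormOn N (Set.Icc (θ 0) (θ K)) γ x := by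
  obtain ⟨w, hw⟩ := exists_isPiecewiseAffineInterp hθ x
  set S := Set.Icc (θ 0) (θ K)
  set A := ⨆ j : Fin (K + 1), N (x (θ j) - y (θ j))
  set H := holderSeminormOn N S γ x
  set δ := dMax K θ
  have hδ' := dMin_pos hθ hK
  have hδ : 0 < δ := hδ'.trans_le (dMin_le_dMax hK)
  have hA : ∀ j ≤ K, N ((x - y) (θ j)) ≤ A := fun j hj =>
    le_iSup (fun i : Fin (K + 1) => N (x (θ i) - y (θ i))) ⟨j, by omega⟩
  have hv := hw.sub hz
  rw [show x - z = (x - w) + (w - z) by abel]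
  calc _ ≤ (supNormOn N S (x - w) + supNormOn N S (w - z))
        + (holderSeminormOn N S β (x - w) + holderSeminormOn N S β (w - z)) :=
        add_le_add hN.supNormOn_add_le hN.holderSeminormOn_add_le
    _ ≤ (ENNReal.ofReal (2 ^ (-γ) * δ ^ γ) * H + A)
        + (ENNReal.ofReal (2 * δ ^ (γ - β)) * H
          + ENNReal.ofReal (2 * δ ^ (1 - β) / dMin K θ) * A) := by
        gcongr
        · exact hw.supNormOn_sub_le hN hθ hK (hβ0.trans hβγ) hγ1
        · exact hv.supNormOn_le hN hθ hK hA
        · exact hw.holderSeminormOn_sub_le hN hθ hK hβ0 hβ1 hβγ hγ1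
        · exact hv.holderSeminormOn_le hN hθ hK hβ0 hβ1 hA
    _ = _ := by
        have hγβ : (2 * δ ^ (-β) + 2 ^ (-γ)) * δ ^ γ = 2 * δ ^ (γ - β) + 2 ^ (-γ) * δ ^ γ := by
          rw [Real.rpow_sub hδ, Real.rpow_neg hδ.le]
          ring
        rw [ENNReal.ofReal_add (by positivity) zero_le_one, ENNReal.ofReal_one, hγβ,
          ENNReal.ofReal_add (by positivity) (by positivity)]
        ring

section LpBridge

variable {Ω E : Type} [MeasurableSpace Ω] [NormedAddCommGroup E] {P : Measure Ω}

lemma isENNSeminorm_eLpNorm [NormedSpace ℝ E] {q : ℝ≥0∞} (hq : 1 ≤ q) :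
    IsENNSeminorm (fun f : Ω →ₘ[P] E => eLpNorm f q P) where
  add_le f g := (eLpNorm_congr_ae (AEEqFun.coeFn_add f g)).trans_le
    (eLpNorm_add_le f.aestronglyMeasurable g.aestronglyMeasurable hq)
  smul c f := (eLpNorm_congr_ae (AEEqFun.coeFn_smul c f)).trans (eLpNorm_const_smul c f q P)

open Classical in
/-- Junk value `0` when `f` is not a.e. strongly measurable. -/
noncomputable def toAEEqFun (P : Measure Ω) (f : Ω → E) : Ω →ₘ[P] E :=
  if h : AEStronglyMeasurable f P then AEEqFun.mk f h else 0

lemma toAEEqFun_eq_mk {f : Ω → E} (h : AEStronglyMeasurable f P) :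
    toAEEqFun P f = AEEqFun.mk f h := by
  rw [toAEEqFun, dif_pos h]

lemma coeFn_toAEEqFun {f : Ω → E} (h : AEStronglyMeasurable f P) : toAEEqFun P f =ᵐ[P] f := by
  rw [toAEEqFun_eq_mk h]
  exact AEEqFun.coeFn_mk f h

variable {K : ℕ} {θ : ℕ → ℝ} {Z Y : ℝ → Ω → E}

lemma IsPiecewiseAffineInterp.aestronglyMeasurable [NormedSpace ℝ E]
    (hZ : IsPiecewiseAffineInterp K θ Z Y)
    (hY : ∀ j ≤ K, AEStronglyMeasurable (Y (θ j)) P) (hK : 1 ≤ K) {t : ℝ}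
    (ht : t ∈ Set.Icc (θ 0) (θ K)) : AEStronglyMeasurable (Z t) P := by
  obtain ⟨j, hj, htj⟩ := exists_mem_Icc_succ_of_mem_Icc hK ht
  rw [hZ j hj t htj]
  exact ((hY j hj.le).const_smul _).add ((hY (j + 1) hj).const_smul _)

lemma IsPiecewiseAffineInterp.toAEEqFun [NormedSpace ℝ E] (hZ : IsPiecewiseAffineInterp K θ Z Y)
    (hY : ∀ j ≤ K, AEStronglyMeasurable (Y (θ j)) P) :
    IsPiecewiseAffineInterp K θ (fun t => toAEEqFun P (Z t)) (fun t => toAEEqFun P (Y t)) := by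
  intro j hj t ht
  have hY₀ := hY j hj.le
  have hY₁ := hY (j + 1) hj
  simp only [hZ j hj t ht, secant, toAEEqFun_eq_mk hY₀, toAEEqFun_eq_mk hY₁, AEEqFun.smul_mk,
    AEEqFun.mk_add_mk]
  exact toAEEqFun_eq_mk _

variable {T p r : ℝ} {X : ℝ → Ω → E} {x : ℝ → Ω →ₘ[P] E}

lemma lpSupNorm_eq_supNormOn (hx : ∀ t ∈ Set.Icc 0 T, x t =ᵐ[P] X t) :
    lpSupNorm P T p X
      = supNormOn (fun f : Ω →ₘ[P] E => eLpNorm f (ENNReal.ofReal p) P) (Set.Icc 0 T) x :=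
  iSup_congr fun t => iSup_congr fun ht => (eLpNorm_congr_ae (hx t ht)).symm

lemma lpHolderSemi_eq_holderSeminormOn (hx : ∀ t ∈ Set.Icc 0 T, x t =ᵐ[P] X t) :
    lpHolderSemi P T p r X
      = holderSeminormOn (fun f : Ω →ₘ[P] E => eLpNorm f (ENNReal.ofReal p) P) (Set.Icc 0 T) r x :=
  iSup_congr fun s => iSup_congr fun t => iSup_congr fun hs => iSup_congr fun ht =>
    iSup_congr fun _ => by
      dsimp only
      rw [eLpNorm_congr_ae ((AEEqFun.coeFn_sub (x s) (x t)).trans ((hx s hs).sub (hx t ht)))]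
      rfl

end LpBridge

theorem cor_hoelder2_i_general
    {Ω E : Type} [MeasurableSpace Ω] [NormedAddCommGroup E] [NormedSpace ℝ E]
    (T : ℝ)
    (K : ℕ) (hK : 1 ≤ K) (θ : ℕ → ℝ)
    (hθ0 : θ 0 = 0) (hθK : θ K = T)
    (hθmono : ∀ j, j < K → θ j < θ (j + 1))
    (P : Measure Ω)
    (p β γ : ℝ) (hp : 1 ≤ p) (hβ : β ∈ Set.Icc (0:ℝ) 1) (hγ : γ ∈ Set.Icc β 1)
    (X Y Z : ℝ → Ω → E)
    (hXmeas : ∀ t ∈ Set.Icc (0:ℝ) T, StronglyMeasurable (X t))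
    (hYmeas : ∀ t ∈ Set.Icc (0:ℝ) T, StronglyMeasurable (Y t))
    (hZ : ∀ ω, ∀ j, j < K → ∀ s ∈ Set.Icc (θ j) (θ (j + 1)),
        Z s ω = ((θ (j + 1) - s) / (θ (j + 1) - θ j)) • Y (θ j) ω
            + ((s - θ j) / (θ (j + 1) - θ j)) • Y (θ (j + 1)) ω) :
    lpHolderNorm P T p β (fun t ω => X t ω - Z t ω)
      ≤ ENNReal.ofReal (2 * (dMax K θ) ^ (1 - β) / dMin K θ + 1) *
          (⨆ j : Fin (K + 1),
              eLpNorm (fun ω => X (θ j) ω - Y (θ j) ω) (ENNReal.ofReal p) P)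
        + ENNReal.ofReal ((2 * (dMax K θ) ^ (-β) + 2 ^ (-γ)) * (dMax K θ) ^ γ) *
            lpHolderSemi P T p γ X := by
  have hS : Set.Icc (θ 0) (θ K) = Set.Icc 0 T := by rw [hθ0, hθK]
  have hnode : ∀ j ≤ K, θ j ∈ Set.Icc 0 T := fun j hj => hS ▸ node_mem_Icc hθmono hj
  have hX : ∀ t ∈ Set.Icc 0 T, toAEEqFun P (X t) =ᵐ[P] X t := fun t ht =>
    coeFn_toAEEqFun (hXmeas t ht).aestronglyMeasurable
  have hY : ∀ j ≤ K, AEStronglyMeasurable (Y (θ j)) P := fun j hj =>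
    (hYmeas _ (hnode j hj)).aestronglyMeasurable
  have hZY : IsPiecewiseAffineInterp K θ Z Y := fun j hj s hs => funext fun ω => hZ ω j hj s hs
  have hXZ : ∀ t ∈ Set.Icc 0 T, toAEEqFun P (X t) - toAEEqFun P (Z t)
      =ᵐ[P] fun ω => X t ω - Z t ω := fun t ht => (AEEqFun.coeFn_sub _ _).trans
    ((hX t ht).sub (coeFn_toAEEqFun (hZY.aestronglyMeasurable hY hK (hS ▸ ht))))
  have hXY : ∀ j : Fin (K + 1), eLpNorm (fun ω => X (θ j) ω - Y (θ j) ω) (ENNReal.ofReal p) P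
      = eLpNorm ⇑(toAEEqFun P (X (θ j)) - toAEEqFun P (Y (θ j))) (ENNReal.ofReal p) P :=
    fun j => eLpNorm_congr_ae ((AEEqFun.coeFn_sub _ _).trans
      ((hX _ (hnode j j.is_le)).sub (coeFn_toAEEqFun (hY j j.is_le)))).symm
  have hN := isENNSeminorm_eLpNorm (P := P) (E := E) (ENNReal.one_le_ofReal.2 hp)
  have key := hN.supNormOn_add_holderSeminormOn_sub_le
    hθmono hK hβ.1 hβ.2 hγ.1 hγ.2 (hZY.toAEEqFun hY) (x := fun t => toAEEqFun P (X t))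
  rw [hS] at key
  rwa [lpHolderNorm, lpSupNorm_eq_supNormOn hXZ, lpHolderSemi_eq_holderSeminormOn hXZ,
    lpHolderSemi_eq_holderSeminormOn hX, iSup_congr hXY]

/-- **Corollary 2.9 (i)** (piecewise affine linear stochastic processes): the
Hölder-in-time `L^p`-distance of a stochastic process `X` to the process `Z`
obtained by pathwise piecewise affine linear interpolation of a process `Y`
at the nodes of a partition is controlled by the distance of `X` and `Y` at
the nodes plus a mesh-size term. -/
theorem cor_hoelder2_i
    {Ω E : Type} [MeasurableSpace Ω] [NormedAddCommGroup E] [NormedSpace ℝ E]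
    [CompleteSpace E]
    (T : ℝ) (hT : 0 < T)
    (K : ℕ) (hK : 1 ≤ K) (θ : ℕ → ℝ)
    (hθ0 : θ 0 = 0) (hθK : θ K = T)
    (hθmono : ∀ j, j < K → θ j < θ (j + 1))
    (P : Measure Ω) [IsProbabilityMeasure P]
    (p β γ : ℝ) (hp : 1 ≤ p) (hβ : β ∈ Set.Icc (0:ℝ) 1) (hγ : γ ∈ Set.Icc β 1)
    (X Y Z : ℝ → Ω → E)
    (hXmeas : ∀ t ∈ Set.Icc (0:ℝ) T, StronglyMeasurable (X t))
    (hYmeas : ∀ t ∈ Set.Icc (0:ℝ) T, StronglyMeasurable (Y t))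
    (hZ : ∀ ω, ∀ j, j < K → ∀ s ∈ Set.Icc (θ j) (θ (j + 1)),
        Z s ω = ((θ (j + 1) - s) / (θ (j + 1) - θ j)) • Y (θ j) ω
            + ((s - θ j) / (θ (j + 1) - θ j)) • Y (θ (j + 1)) ω) :
    lpHolderNorm P T p β (fun t ω => X t ω - Z t ω)
      ≤ ENNReal.ofReal (2 * (dMax K θ) ^ (1 - β) / dMin K θ + 1) *
          (⨆ j : Fin (K + 1),
              eLpNorm (fun ω => X (θ j) ω - Y (θ j) ω) (ENNReal.ofReal p) P)
        + ENNReal.ofReal ((2 * (dMax K θ) ^ (-β) + 2 ^ (-γ)) * (dMax K θ) ^ γ) *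
            lpHolderSemi P T p γ X :=
  cor_hoelder2_i_general T K hK θ hθ0 hθK hθmono P p β γ hp hβ hγ X Y Z hXmeas hYmeas hZ
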